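/- Let I be an almost reverse lexicographic ideal in R = k[x_1,...,x_n] whose last generator is M_ω = x^ω with ω = (ω_1,...,ω_μ), ω_μ > 0. For any α = (α_1,...,α_{μ-1}) ∈ Z_{≥0}^{μ-1} with α_1 < f_1, α_j < f_j(α_1,...,α_{j-1}) for 2 ≤ j ≤ μ-1, and α ≥ (ω_1,...,ω_{μ-1}) (in the induced reverse lex order on tuples), the quantity f_μ(α) = min{t : x^α x_μ^t ∈ I} satisfies 0 < f_μ(α) < ∞, and moreover x^α x_μ^{f_μ(α)} is a minimal generator of I. -/

import Mathlib

open scoped Classical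

/-- Degree of an exponent vector (monomial). -/
def mdeg {n : ℕ} (m : Fin n → ℕ) : ℕ := ∑ i, m i

/-- Degree reverse lexicographic order: `M > N`. -/
def RevLexGT {n : ℕ} (M N : Fin n → ℕ) : Prop :=
  mdeg N < mdeg M ∨
    (mdeg M = mdeg N ∧ ∃ s : Fin n, (∀ i : Fin n, s < i → M i = N i) ∧ M s < N s)

/-- A monomial ideal, identified with its set of monomials (exponent vectors),
is upward closed under divisibility. -/
def MonIdeal {n : ℕ} (I : Set (Fin n → ℕ)) : Prop :=
  ∀ m ∈ I, ∀ m' : Fin n → ℕ, (∀ i, m i ≤ m' i) → m' ∈ I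

/-- `m` is a minimal generator of the monomial ideal `I`. -/
def MinGen {n : ℕ} (I : Set (Fin n → ℕ)) (m : Fin n → ℕ) : Prop :=
  m ∈ I ∧ ∀ m' ∈ I, (∀ i, m' i ≤ m i) → m' = m

/-- Almost reverse lexicographic ideal. -/
def ARL {n : ℕ} (I : Set (Fin n → ℕ)) : Prop :=
  ∀ M N : Fin n → ℕ, MinGen I N → mdeg M = mdeg N → RevLexGT M N → M ∈ I

/-- Strongly stable monomial ideal. -/
def StronglyStable {n : ℕ} (I : Set (Fin n → ℕ)) : Prop :=
  MonIdeal I ∧ ∀ M ∈ I, ∀ i j : Fin n, j < i → 0 < M i →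
    (fun k => if k = i then M i - 1 else if k = j then M j + 1 else M k) ∈ I

/-- The last generator `M_ω` of a monomial ideal: a minimal generator of maximal
degree which is smallest in the degree reverse lexicographic order among the
minimal generators of that degree. -/
def IsLastGen {n : ℕ} (I : Set (Fin n → ℕ)) (W : Fin n → ℕ) : Prop :=
  MinGen I W ∧ (∀ N, MinGen I N → mdeg N ≤ mdeg W) ∧
    (∀ N, MinGen I N → mdeg N = mdeg W → N = W ∨ RevLexGT N W)

/-- `max M`: the largest (1-based) index of a variable dividing `M` (0 for `M = 1`). -/
def maxVar {n : ℕ} (m : Fin n → ℕ) : ℕ :=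
  Finset.univ.sup (fun i : Fin n => if 0 < m i then i.1 + 1 else 0)

/-- Hilbert function of `R/I`: the number of monomials of degree `d` not in `I`. -/
noncomputable def hilb {n : ℕ} (I : Set (Fin n → ℕ)) (d : ℕ) : ℕ :=
  Set.ncard {m : Fin n → ℕ | mdeg m = d ∧ m ∉ I}

/-- Truncation of an exponent vector to its first `i` coordinates. -/
def truncW {n : ℕ} (W : Fin n → ℕ) (i : ℕ) : Fin n → ℕ :=
  fun j => if j.1 < i then W j else 0

/-- The set `𝓘_i` (for `i ≤ μ-2`): exponent vectors supported on the first `i`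
coordinates, coordinatewise below the `f_j`'s, i.e. not lying in `I`. -/
def Iset {n : ℕ} (I : Set (Fin n → ℕ)) (i : ℕ) : Set (Fin n → ℕ) :=
  {α | (∀ k : Fin n, i ≤ k.1 → α k = 0) ∧ α ∉ I}

/-- The set `𝓘_{μ-1}`, which additionally requires `α ≥ (ω_1,…,ω_{μ-1})`. -/
def IsetLast {n : ℕ} (I : Set (Fin n → ℕ)) (W : Fin n → ℕ) (μ : ℕ) :
    Set (Fin n → ℕ) :=
  {α | α ∈ Iset I (μ - 1) ∧ (α = truncW W (μ - 1) ∨ RevLexGT α (truncW W (μ - 1)))}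

/-- `f_{i+1}(α) = min {t : x^α x_{i+1}^t ∈ I}` (ℕ-valued, junk `0` if no such `t`). -/
noncomputable def fmin {n : ℕ} (I : Set (Fin n → ℕ)) (α : Fin n → ℕ) (i : Fin n) : ℕ :=
  sInf {t | α + Pi.single i t ∈ I}

/-- `f_{i+1}(α)` valued in `ℕ∞` (equal to `⊤` when no power works). -/
noncomputable def fminTop {n : ℕ} (I : Set (Fin n → ℕ)) (α : Fin n → ℕ) (i : Fin n) : ℕ∞ :=
  sInf ((fun t : ℕ => (t : ℕ∞)) '' {t | α + Pi.single i t ∈ I})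

/-- Iterated truncated difference sequence `h^{(i)}`. -/
def hseq (h : ℕ → ℕ) : ℕ → ℕ → ℕ
  | 0, d => h d
  | _ + 1, 0 => 1
  | i + 1, e + 1 => hseq h i (e + 1) - hseq h i e

/-- The set whose infimum is `r_i(h)`. -/
def rset (h : ℕ → ℕ) (i : ℕ) : Set ℕ :=
  {d | 1 ≤ d ∧ hseq h i d ≤ hseq h i (d - 1)}

/-- `D(h) = min {i : r_i < ∞}`. -/
noncomputable def Dval (h : ℕ → ℕ) : ℕ := sInf {i | (rset h i).Nonempty}

/-- `h` is unimodal at each tail. -/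
def UnimodalAtTails (h : ℕ → ℕ) : Prop :=
  ∀ i, Dval h ≤ i → i < max 1 (h 1) →
    ∀ d, (∃ r ∈ rset h i, r ≤ d) → hseq h i d ≤ hseq h i (d - 1)

/-- The polynomial `Π (1 - z^{d_i})`. -/
noncomputable def froPoly (ds : List ℕ) : Polynomial ℤ :=
  (ds.map (fun d => 1 - Polynomial.X ^ d)).prod

/-- Coefficient of `z^i` in the power series `Π (1 - z^{d_i}) / (1-z)^n`. -/
noncomputable def froCoeff (n : ℕ) (ds : List ℕ) (i : ℕ) : ℤ :=
  ∑ j ∈ Finset.range (i + 1),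
    (froPoly ds).coeff j * (Nat.choose (n - 1 + (i - j)) (i - j) : ℤ)

/-- The Fröberg sequence `|n; d_1,…,d_m|`: the truncation `| · |` of the power
series `Π (1 - z^{d_i}) / (1-z)^n`. -/
noncomputable def fro (n : ℕ) (ds : List ℕ) (i : ℕ) : ℕ :=
  if ∀ j ≤ i, 0 < froCoeff n ds j then (froCoeff n ds i).toNat else 0

/-!
Write `p = μ - 1`. Every monomial of degree `deg ω` supported on `x_1, …, x_{μ-1}` is
revlex-larger than `x^ω`, hence lies in `I`; so `x^α ∉ I` forces `deg α < deg ω`, and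
`x^α x_μ^(deg ω - deg α)` has degree `deg ω` and is at least `x^ω`, so it lies in `I`.
For minimality with `f = f_μ(α)`, a minimal generator `N` dividing `x^α x_μ^f` must contain
`x_μ^f`; if `N ≠ x^α x_μ^f`, some `x_i` with `i < μ` occurs in `N` less often than in `x^α`,
and trading one `x_μ` of `N` for `x_i` gives a revlex-larger monomial of the same degree,
which lies in `I` by the ARL property and divides `x^α x_μ^(f-1)`.
-/

lemma mdeg_add {n : ℕ} (a b : Fin n → ℕ) : mdeg (a + b) = mdeg a + mdeg b :=
  Finset.sum_add_distrib

lemma mdeg_single {n : ℕ} (i : Fin n) (x : ℕ) : mdeg (Pi.single i x) = x := by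
  simp [mdeg, Finset.sum_pi_single']

lemma exists_le_mdeg_eq {n : ℕ} (m : Fin n → ℕ) :
    ∀ e ≤ mdeg m, ∃ β ≤ m, mdeg β = e := by
  intro e
  induction e with
  | zero => exact fun _ => ⟨0, bot_le, by simp [mdeg]⟩
  | succ e ih =>
    intro he
    obtain ⟨β, hβm, hβe⟩ := ih (by omega)
    obtain ⟨i, hi⟩ : ∃ i, β i < m i := by
      by_contra! h
      rw [le_antisymm hβm h] at hβe
      omega
    refine ⟨β + Pi.single i 1, fun k => ?_, by rw [mdeg_add, mdeg_single, hβe]⟩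
    by_cases hk : k = i
    · subst hk; simpa using hi
    · simpa [hk] using hβm k

lemma exists_minGen_le {n : ℕ} {I : Set (Fin n → ℕ)} {m : Fin n → ℕ} (hm : m ∈ I) :
    ∃ N ≤ m, MinGen I N := by
  obtain ⟨N, hNm, hN⟩ := exists_minimal_le_of_wellFoundedLT (· ∈ I) m hm
  exact ⟨N, hNm, hN.1, fun m' hm' hle => le_antisymm hle (hN.2 hm' hle)⟩

lemma truncW_add_single {n : ℕ} {W : Fin n → ℕ} {p : Fin n} (hW : ∀ k, p < k → W k = 0) :
    truncW W p + Pi.single p (W p) = W := by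
  funext k
  rcases lt_trichotomy k p with h | rfl | h
  · simp [truncW, Fin.lt_def.mp h, h.ne]
  · simp [truncW]
  · simp [truncW, h.ne', hW k h, (Fin.lt_def.mp h).not_gt]

lemma truncW_of_le {n : ℕ} (W : Fin n → ℕ) {p k : Fin n} (h : p ≤ k) :
    truncW W p k = 0 := by
  simp [truncW, not_lt.mpr (Fin.le_def.mp h)]

lemma pos_and_vanishing_above_of_maxVar_eq_succ {n : ℕ} {W : Fin n → ℕ} {p : Fin n}
    (h : maxVar W = p + 1) :
    0 < W p ∧ ∀ k, p < k → W k = 0 := by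
  constructor
  · obtain ⟨i, -, hi⟩ := Finset.exists_mem_eq_sup Finset.univ ⟨p, Finset.mem_univ p⟩
      (fun i : Fin n => if 0 < W i then i.1 + 1 else 0)
    rw [← maxVar, h] at hi
    split_ifs at hi with hWi
    · obtain rfl : i = p := Fin.ext (Nat.succ_injective hi).symm
      exact hWi
  · intro k hk
    by_contra hWk
    have hle : k.1 + 1 ≤ maxVar W := by
      have := Finset.le_sup (f := fun i : Fin n => if 0 < W i then i.1 + 1 else 0)
        (Finset.mem_univ k)
      rwa [if_pos (Nat.pos_of_ne_zero hWk)] at this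
    have := Fin.lt_def.mp hk
    omega

/-- Moving one factor of a minimal generator to a smaller variable makes it larger in revlex. -/
lemma ARL.add_single_mem_of_lt {n : ℕ} {I : Set (Fin n → ℕ)} (hARL : ARL I)
    {M : Fin n → ℕ} {i j : Fin n} (hN : MinGen I (M + Pi.single i 1)) (hji : j < i) :
    M + Pi.single j 1 ∈ I := by
  have hdeg : mdeg (M + Pi.single j 1) = mdeg (M + Pi.single i 1) := by
    simp only [mdeg_add, mdeg_single]
  refine hARL _ _ hN hdeg (Or.inr ⟨hdeg, i, fun k hk => ?_, ?_⟩)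
  · simp [hk.ne', (hji.trans hk).ne']
  · simp [hji.ne']

lemma fmin_pos {n : ℕ} {I : Set (Fin n → ℕ)} {α : Fin n → ℕ} {p : Fin n} (hαI : α ∉ I)
    (hne : {t | α + Pi.single p t ∈ I}.Nonempty) : 0 < fmin I α p := by
  refine Nat.pos_of_ne_zero fun h => hαI ?_
  have h0 : α + Pi.single p (fmin I α p) ∈ I := Nat.sInf_mem hne
  simpa [h] using h0

lemma ARL.minGen_add_single_fmin {n : ℕ} {I : Set (Fin n → ℕ)} (hI : MonIdeal I) (hARL : ARL I)
    {α : Fin n → ℕ} {p : Fin n} (hαsupp : ∀ k, p ≤ k → α k = 0) (hαI : α ∉ I)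
    (hne : {t | α + Pi.single p t ∈ I}.Nonempty) :
    MinGen I (α + Pi.single p (fmin I α p)) := by
  set F := fmin I α p
  have hF := fmin_pos hαI hne
  have hlow : ∀ t < F, α + Pi.single p t ∉ I := fun t ht => Nat.notMem_of_lt_sInf ht
  refine ⟨Nat.sInf_mem hne, fun m hm hmG => ?_⟩
  obtain ⟨N, hNm, hN⟩ := exists_minGen_le hm
  have hNG : N ≤ α + Pi.single p F := hNm.trans hmG
  have hNoff : ∀ k ≠ p, N k ≤ α k := fun k hk => by simpa [hk] using hNG k
  have hNp : N p = F := by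
    refine le_antisymm (by simpa [hαsupp p le_rfl] using hNG p) (not_lt.mp fun hlt => ?_)
    refine hlow _ hlt (hI N hN.1 _ fun k => ?_)
    by_cases hk : k = p
    · subst hk; simp
    · simpa [hk] using hNoff k hk
  suffices N = α + Pi.single p F from le_antisymm hmG (this ▸ hNm)
  by_contra hne'
  obtain ⟨i, hi⟩ : ∃ i, N i < (α + Pi.single p F : Fin n → ℕ) i :=
    (Pi.lt_def.mp (lt_of_le_of_ne hNG hne')).2
  have hip : i ≠ p := by rintro rfl; simp [hαsupp i le_rfl, hNp] at hi
  have hi' : N i < α i := by simpa [hip] using hi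
  have hip' : i < p := lt_of_not_ge fun h => by simp [hαsupp i h] at hi'
  obtain ⟨M, rfl⟩ : ∃ M, N = M + Pi.single p 1 :=
    ⟨N - Pi.single p 1, (tsub_add_cancel_of_le fun k => by
      by_cases hk : k = p <;> simp [hk]; omega).symm⟩
  refine hlow (F - 1) (by omega) (hI _ (hARL.add_single_mem_of_lt hN hip') _ fun k => ?_)
  by_cases hkp : k = p
  · subst hkp; simp [hip] at hNp ⊢; omega
  by_cases hki : k = i
  · subst hki; simp [hkp] at hi' ⊢; omega
  · simpa [hkp, hki] using hNoff k hkp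

section LastGenerator

variable {n : ℕ} {I : Set (Fin n → ℕ)} (hARL : ARL I) {W : Fin n → ℕ} {p : Fin n}
  (hW : MinGen I W) (hWp : 0 < W p) (hWtop : ∀ k, p < k → W k = 0) {α : Fin n → ℕ} (hαsupp : ∀ k, p ≤ k → α k = 0)
include hARL hW hWp hWtop

lemma ARL.mem_of_mdeg_eq {M : Fin n → ℕ} (hM : ∀ k, p ≤ k → M k = 0)
    (hdeg : mdeg M = mdeg W) : M ∈ I :=
  hARL M W hW hdeg <| Or.inr ⟨hdeg, p, fun k hk => by rw [hM k hk.le, hWtop k hk],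
    by rwa [hM p le_rfl]⟩

include hαsupp

lemma ARL.mdeg_lt_of_notMem (hI : MonIdeal I) (hαI : α ∉ I) : mdeg α < mdeg W := by
  by_contra! h
  obtain ⟨β, hβα, hβ⟩ := exists_le_mdeg_eq α _ h
  have hβsupp : ∀ k, p ≤ k → β k = 0 := fun k hk => by simpa [hαsupp k hk] using hβα k
  exact hαI (hI β (hARL.mem_of_mdeg_eq hW hWp hWtop hβsupp hβ) α hβα)

lemma ARL.add_single_mem_of_truncW_le (hαW : mdeg α < mdeg W)
    (hge : α = truncW W p ∨ RevLexGT α (truncW W p)) :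
    α + Pi.single p (mdeg W - mdeg α) ∈ I := by
  have hsplit := truncW_add_single hWtop
  have hdegW : mdeg (truncW W p) + W p = mdeg W := by
    rw [← mdeg_single p (W p), ← mdeg_add, hsplit]
  have hdeg : mdeg (α + Pi.single p (mdeg W - mdeg α)) = mdeg W := by
    rw [mdeg_add, mdeg_single]; omega
  rcases hge with rfl | hlt | ⟨heq, s, hs, hlt⟩
  · rw [show mdeg W - mdeg (truncW W p) = W p by omega, hsplit]
    exact hW.1
  · refine hARL _ W hW hdeg (Or.inr ⟨hdeg, p, fun k hk => ?_, ?_⟩)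
    · simp [hαsupp k hk.le, hk.ne', hWtop k hk]
    · simp [hαsupp p le_rfl]; omega
  · have hsp : s < p := by
      by_contra! h
      rw [truncW_of_le W h] at hlt
      omega
    have ht : mdeg W - mdeg α = W p := by omega
    rw [ht] at hdeg ⊢
    refine hARL _ W hW hdeg (Or.inr ⟨hdeg, s, fun k hk => ?_, ?_⟩) <;>
      conv_rhs => rw [← hsplit]
    · simp [hs k hk]
    · simpa [hsp.ne] using hlt

end LastGenerator

/-- For an ARL ideal with last generator `x^ω` (`max = μ`) and any
`α ∈ 𝓘_{μ-1}`, one has `0 < f_μ(α) < ∞` and `x^α x_μ^{f_μ(α)}` is a minimal generator. -/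
theorem arl_last_level_minimal_generators {n μ : ℕ} (I : Set (Fin n → ℕ))
    (hI : MonIdeal I) (hARL : ARL I)
    (W : Fin n → ℕ) (hW : IsLastGen I W) (hmax : maxVar W = μ)
    (hμ : 1 ≤ μ) (hμn : μ ≤ n)
    (α : Fin n → ℕ) (hα : α ∈ Iset I (μ - 1))
    (hge : α = truncW W (μ - 1) ∨ RevLexGT α (truncW W (μ - 1))) :
    0 < fmin I α ⟨μ - 1, by omega⟩ ∧
    {t | α + Pi.single (⟨μ - 1, by omega⟩ : Fin n) t ∈ I}.Nonempty ∧
    MinGen I (α + Pi.single (⟨μ - 1, by omega⟩ : Fin n) (fmin I α ⟨μ - 1, by omega⟩)) := by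
  set p : Fin n := ⟨μ - 1, by omega⟩
  obtain ⟨hWp, hWtop⟩ := pos_and_vanishing_above_of_maxVar_eq_succ (W := W) (p := p) (by simp only [p]; omega)
  obtain ⟨hαsupp, hαI⟩ := hα
  have hαW := hARL.mdeg_lt_of_notMem hW.1 hWp hWtop hαsupp hI hαI
  have hne : {t | α + Pi.single p t ∈ I}.Nonempty :=
    ⟨_, hARL.add_single_mem_of_truncW_le hW.1 hWp hWtop hαsupp hαW hge⟩
  exact ⟨fmin_pos hαI hne, hne, hARL.minGen_add_single_fmin hI hαsupp hαI hne⟩
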